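/- Let N ∈ ℕ, let φ_1, …, φ_N : ℕ → ℤ be strongly asymptotically independent sequences, and let t ∈ ℕ. For s ∈ ℕ let 𝔐_s(φ_1,…,φ_N) denote the set of all (α_1, …, α_s) ∈ ℝ^s such that the ℝ^{Ns}-valued sequence (φ_1(k)α_1, …, φ_N(k)α_1, …, φ_1(k)α_s, …, φ_N(k)α_s)_{k∈ℕ} is uniformly distributed mod 1. Then for every (α_1, …, α_t) ∈ 𝔐_t(φ_1,…,φ_N), the set of all α ∈ ℝ with (α_1, …, α_t, α) ∈ 𝔐_{t+1}(φ_1,…,φ_N) has full Lebesgue measure in ℝ, i.e. its complement is Lebesgue null. -/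

import Mathlib

/-!
Split a nonzero frequency vector into its old part `b` and the coefficients `c` of the new
coordinate `β`: the Weyl sum becomes `∑ₖ 𝐞 (θ k + ψ k * β)` with `ψ = ∑ⱼ cⱼ φⱼ`. If `c = 0` this is
a Weyl sum of `(α₁, …, αₜ)`. Otherwise `ψ` is eventually strictly monotone, hence injective on
some `[K, ∞)`, and orthogonality of `β ↦ 𝐞 (n * β)` on unit intervals gives
`∫ₙⁿ⁺¹ ‖avg_M‖² ≤ (K + 1) / M`. These bounds are summable along `M = m²`, so `avg_{m²} β → 0` for
almost every `β`, and between consecutive squares the average moves by `O(1 / m)`. There are only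
countably many frequency vectors and unit intervals.
-/

open Filter Topology MeasureTheory

noncomputable section

/-- `φ_1,…,φ_N : ℕ → ℤ` are strongly asymptotically independent: every nontrivial
integer linear combination of them is eventually strictly monotone. -/
def StronglyAsympIndep (N : ℕ) (φ : Fin N → ℕ → ℤ) : Prop :=
  ∀ a : Fin N → ℤ, a ≠ 0 → ∃ K : ℕ,
    StrictMonoOn (fun k => ∑ j, a j * φ j k) (Set.Ici K) ∨
    StrictAntiOn (fun k => ∑ j, a j * φ j k) (Set.Ici K)

/-- A sequence `x : ℕ → ℝ^ι` is uniformly distributed mod 1 (via Weyl's criterion):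
for every nonzero `a ∈ ℤ^ι`, `(1/M) Σ_{k=1}^M e^{2πi⟨a, x_k⟩} → 0`. -/
def UDMod1 {ι : Type*} [Fintype ι] (x : ℕ → ι → ℝ) : Prop :=
  ∀ a : ι → ℤ, a ≠ 0 →
    Tendsto (fun M : ℕ => (M : ℂ)⁻¹ *
        ∑ k ∈ Finset.Icc 1 M,
          Complex.exp (2 * Real.pi * Complex.I * (∑ i, (a i : ℂ) * (x k i : ℂ))))
      atTop (𝓝 0)

open Real FourierTransform Finset

theorem integral_fourierChar_intCast_mul (n : ℤ) (a : ℝ) :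
    ∫ x in a..a + 1, (𝐞 (n * x) : ℂ) = if n = 0 then 1 else 0 := by
  split_ifs with hn
  · simp [hn]
  have hc : 2 * π * n * Complex.I ≠ 0 := by simp [pi_ne_zero, hn, Complex.I_ne_zero]
  have hexp : ∀ x : ℝ, (𝐞 (n * x) : ℂ) = Complex.exp (2 * π * n * Complex.I * x) := by
    intro x; rw [fourierChar_apply]; push_cast; ring_nf
  simp only [hexp, integral_exp_mul_complex hc]
  have hperiod : Complex.exp (2 * π * n * Complex.I) = 1 := by
    rw [← Complex.exp_int_mul_two_pi_mul_I n]; ring_nf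
  rw [Complex.ofReal_add, mul_add, Complex.ofReal_one, mul_one, Complex.exp_add, hperiod]
  simp

theorem integral_norm_sq_sum_fourierChar_le {ι : Type*} (s : Finset ι) (θ : ι → ℝ) (ψ : ι → ℤ)
    (a : ℝ) :
    ∫ β in a..a + 1, ‖∑ k ∈ s, (𝐞 (θ k + ψ k * β) : ℂ)‖ ^ 2 ≤
      ∑ k ∈ s, (#{l ∈ s | ψ l = ψ k} : ℝ) := by
  have hexpand : ∀ β : ℝ, ((‖∑ k ∈ s, (𝐞 (θ k + ψ k * β) : ℂ)‖ ^ 2 : ℝ) : ℂ) =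
      ∑ k ∈ s, ∑ l ∈ s, (𝐞 (θ k - θ l) : ℂ) * 𝐞 ((ψ k - ψ l : ℤ) * β) := by
    intro β
    rw [Complex.ofReal_pow, ← Complex.mul_conj', map_sum, Finset.sum_mul_sum]
    refine Finset.sum_congr rfl fun k _ => Finset.sum_congr rfl fun l _ => ?_
    rw [← Circle.coe_inv_eq_conj, ← Circle.coe_mul, ← Circle.coe_mul, ← AddChar.map_neg_eq_inv,
      ← AddChar.map_add_eq_mul, ← AddChar.map_add_eq_mul]
    congr 2
    push_cast
    ring
  have hintegral : ((∫ β in a..a + 1, ‖∑ k ∈ s, (𝐞 (θ k + ψ k * β) : ℂ)‖ ^ 2 : ℝ) : ℂ) =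
      ∑ k ∈ s, ∑ l ∈ s, if ψ l = ψ k then (𝐞 (θ k - θ l) : ℂ) else 0 := by
    have hcont : ∀ k l, Continuous fun β : ℝ => (𝐞 (θ k - θ l) : ℂ) * 𝐞 ((ψ k - ψ l : ℤ) * β) :=
      fun k l => by fun_prop
    rw [← intervalIntegral.integral_ofReal]
    simp only [hexpand]
    rw [intervalIntegral.integral_finsetSum fun k _ =>
      (continuous_finsetSum _ fun l _ => hcont k l).intervalIntegrable _ _]
    refine Finset.sum_congr rfl fun k _ => ?_
    rw [intervalIntegral.integral_finsetSum fun l _ => (hcont k l).intervalIntegrable _ _]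
    refine Finset.sum_congr rfl fun l _ => ?_
    rw [intervalIntegral.integral_const_mul, integral_fourierChar_intCast_mul]
    simp only [sub_eq_zero, mul_ite, mul_one, mul_zero]
    exact if_congr eq_comm rfl rfl
  calc ∫ β in a..a + 1, ‖∑ k ∈ s, (𝐞 (θ k + ψ k * β) : ℂ)‖ ^ 2
      = (∑ k ∈ s, ∑ l ∈ s, if ψ l = ψ k then (𝐞 (θ k - θ l) : ℂ) else 0).re := by
        rw [← hintegral, Complex.ofReal_re]
    _ ≤ ∑ k ∈ s, ‖∑ l ∈ s, if ψ l = ψ k then (𝐞 (θ k - θ l) : ℂ) else 0‖ :=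
        (Complex.re_le_norm _).trans (norm_sum_le _ _)
    _ ≤ ∑ k ∈ s, (#{l ∈ s | ψ l = ψ k} : ℝ) := by
        refine Finset.sum_le_sum fun k _ => ?_
        rw [← Finset.sum_filter]
        refine (norm_sum_le _ _).trans ?_
        simp [Circle.norm_coe]

theorem card_filter_eq_le_of_injOn_Ici {α : Type*} [DecidableEq α] {ψ : ℕ → α} {K : ℕ}
    (hψ : Set.InjOn ψ (Set.Ici K)) (s : Finset ℕ) (v : α) : #{l ∈ s | ψ l = v} ≤ K + 1 := by
  have htail : #{l ∈ s | K ≤ l ∧ ψ l = v} ≤ 1 := by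
    refine Finset.card_le_one.2 fun l hl m hm => ?_
    simp only [Finset.mem_filter] at hl hm
    exact hψ hl.2.1 hm.2.1 (hl.2.2.trans hm.2.2.symm)
  calc #{l ∈ s | ψ l = v} ≤ #(range K ∪ {l ∈ s | K ≤ l ∧ ψ l = v}) := by
        refine Finset.card_le_card fun l hl => ?_
        simp only [Finset.mem_filter] at hl
        by_cases hlK : l < K
        · exact Finset.mem_union_left _ (Finset.mem_range.2 hlK)
        · exact Finset.mem_union_right _ (Finset.mem_filter.2 ⟨hl.1, not_lt.1 hlK, hl.2⟩)
    _ ≤ K + 1 := (Finset.card_union_le _ _).trans (by simpa using htail)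

def cesaroAvg (u : ℕ → ℂ) (M : ℕ) : ℂ := (M : ℂ)⁻¹ * ∑ k ∈ Icc 1 M, u k

theorem norm_cesaroAvg (u : ℕ → ℂ) (M : ℕ) :
    ‖cesaroAvg u M‖ = (M : ℝ)⁻¹ * ‖∑ k ∈ Icc 1 M, u k‖ := by
  simp [cesaroAvg]

theorem integral_norm_sq_cesaroAvg_fourierChar_le {ψ : ℕ → ℤ} {K : ℕ}
    (hψ : Set.InjOn ψ (Set.Ici K)) (θ : ℕ → ℝ) (a : ℝ) (M : ℕ) :
    ∫ β in a..a + 1, ‖cesaroAvg (fun k => 𝐞 (θ k + ψ k * β)) M‖ ^ 2 ≤ (K + 1) / M := by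
  simp only [norm_cesaroAvg, mul_pow, intervalIntegral.integral_const_mul]
  have hcount : ∑ k ∈ Icc 1 M, (#{l ∈ Icc 1 M | ψ l = ψ k} : ℝ) ≤ M * (K + 1) := by
    have := Finset.sum_le_card_nsmul (Icc 1 M) (fun k => (#{l ∈ Icc 1 M | ψ l = ψ k} : ℝ))
      (K + 1) fun k _ => by exact_mod_cast card_filter_eq_le_of_injOn_Ici hψ _ _
    simpa [mul_add] using this
  calc (M : ℝ)⁻¹ ^ 2 * ∫ β in a..a + 1, ‖∑ k ∈ Icc 1 M, (𝐞 (θ k + ψ k * β) : ℂ)‖ ^ 2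
      ≤ (M : ℝ)⁻¹ ^ 2 * (M * (K + 1)) := by
        gcongr
        exact (integral_norm_sq_sum_fourierChar_le _ θ ψ a).trans hcount
    _ = ((K : ℝ) + 1) / M := by
        rcases eq_or_ne (M : ℝ) 0 with hM | hM
        · simp [hM]
        · field_simp

theorem ae_tendsto_zero_of_summable_integral {α : Type*} [MeasurableSpace α] {μ : Measure α}
    {F : ℕ → α → ℝ} (hF : ∀ n, 0 ≤ F n) (hFi : ∀ n, Integrable (F n) μ)
    (hsum : Summable fun n => ∫ x, F n x ∂μ) :
    ∀ᵐ x ∂μ, Tendsto (fun n => F n x) atTop (𝓝 0) := by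
  have hlint : ∫⁻ x, ∑' n, ENNReal.ofReal (F n x) ∂μ ≠ ⊤ := by
    rw [lintegral_tsum fun n => (hFi n).aemeasurable.ennreal_ofReal]
    simp_rw [← ofReal_integral_eq_lintegral_ofReal (hFi _) (.of_forall (hF _))]
    rw [← ENNReal.ofReal_tsum_of_nonneg (fun n => integral_nonneg (hF n)) hsum]
    exact ENNReal.ofReal_ne_top
  filter_upwards [ae_lt_top' (AEMeasurable.tsum fun n =>
    (hFi n).aemeasurable.ennreal_ofReal) hlint] with x hx
  have := (ENNReal.tendsto_toReal ENNReal.zero_ne_top).comp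
    (ENNReal.tendsto_atTop_zero_of_tsum_ne_top hx.ne)
  simpa [Function.comp_def, ENNReal.toReal_ofReal (hF _ x)] using this

theorem Nat.tendsto_sqrt_atTop : Tendsto Nat.sqrt atTop atTop :=
  tendsto_atTop_atTop.2 fun b => ⟨b ^ 2, fun _ hn => Nat.le_sqrt'.2 hn⟩

theorem norm_cesaroAvg_le_of_sq_le {u : ℕ → ℂ} {C : ℝ} (hu : ∀ k, ‖u k‖ ≤ C) {m M : ℕ}
    (hm : 1 ≤ m) (hmM : m ^ 2 ≤ M) (hMm : M < (m + 1) ^ 2) :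
    ‖cesaroAvg u M‖ ≤ ‖cesaroAvg u (m ^ 2)‖ + 2 * C / m := by
  have hC : 0 ≤ C := (norm_nonneg _).trans (hu 0)
  have hm' : (1 : ℝ) ≤ m := by exact_mod_cast hm
  have hmM' : (m : ℝ) ^ 2 ≤ M := by exact_mod_cast hmM
  have hgap : (M : ℝ) - m ^ 2 ≤ 2 * m := by
    have : (M : ℝ) + 1 ≤ (m + 1) ^ 2 := by exact_mod_cast hMm
    linarith
  have hsplit : ∑ k ∈ Icc 1 M, u k = ∑ k ∈ Icc 1 (m ^ 2), u k + ∑ k ∈ Ioc (m ^ 2) M, u k :=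
    (sum_Ioc_consecutive u (Nat.zero_le _) hmM).symm
  have htail : ‖∑ k ∈ Ioc (m ^ 2) M, u k‖ ≤ 2 * m * C := by
    calc ‖∑ k ∈ Ioc (m ^ 2) M, u k‖ ≤ ∑ k ∈ Ioc (m ^ 2) M, C := norm_sum_le_of_le _ fun k _ => hu k
      _ = ((M : ℝ) - m ^ 2) * C := by
        rw [sum_const, Nat.card_Ioc, nsmul_eq_mul, Nat.cast_sub hmM]; push_cast; ring
      _ ≤ 2 * m * C := by gcongr
  have hhead : ‖∑ k ∈ Icc 1 (m ^ 2), u k‖ = m ^ 2 * ‖cesaroAvg u (m ^ 2)‖ := by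
    have : (m : ℝ) ≠ 0 := by positivity
    rw [norm_cesaroAvg]; push_cast; field_simp
  have hMpos : (0 : ℝ) < M := by nlinarith
  calc ‖cesaroAvg u M‖ ≤ (M : ℝ)⁻¹ * (m ^ 2 * ‖cesaroAvg u (m ^ 2)‖ + 2 * m * C) := by
        rw [norm_cesaroAvg, hsplit, ← hhead]
        gcongr
        exact (norm_add_le _ _).trans (by linarith)
    _ ≤ ‖cesaroAvg u (m ^ 2)‖ + 2 * C / m := by
        rw [mul_add]
        gcongr
        · rw [← mul_assoc]
          exact mul_le_of_le_one_left (norm_nonneg _) (inv_mul_le_one_of_le₀ hmM' hMpos.le)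
        · rw [inv_mul_le_iff₀ hMpos, mul_div_assoc', le_div_iff₀ (by positivity)]
          nlinarith

theorem tendsto_cesaroAvg_of_tendsto_sq {u : ℕ → ℂ} {C : ℝ} (hu : ∀ k, ‖u k‖ ≤ C)
    (h : Tendsto (fun m => cesaroAvg u (m ^ 2)) atTop (𝓝 0)) :
    Tendsto (cesaroAvg u) atTop (𝓝 0) := by
  have hbound : ∀ M, 1 ≤ M →
      ‖cesaroAvg u M‖ ≤ ‖cesaroAvg u (Nat.sqrt M ^ 2)‖ + 2 * C / Nat.sqrt M := fun M hM =>
    norm_cesaroAvg_le_of_sq_le hu (Nat.sqrt_pos.2 hM) (Nat.sqrt_le' M) (Nat.lt_succ_sqrt' M)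
  have hmajorant :
      Tendsto (fun M : ℕ => ‖cesaroAvg u (Nat.sqrt M ^ 2)‖ + 2 * C / Nat.sqrt M) atTop (𝓝 0) := by
    simpa [Function.comp_def] using ((tendsto_zero_iff_norm_tendsto_zero.1 h).add
      (tendsto_const_div_atTop_nhds_zero_nat (2 * C))).comp Nat.tendsto_sqrt_atTop
  exact squeeze_zero_norm' ((eventually_ge_atTop 1).mono hbound) hmajorant

theorem ae_tendsto_cesaroAvg_fourierChar {ψ : ℕ → ℤ} {K : ℕ} (hψ : Set.InjOn ψ (Set.Ici K))
    (θ : ℕ → ℝ) : ∀ᵐ β, Tendsto (cesaroAvg fun k => 𝐞 (θ k + ψ k * β)) atTop (𝓝 0) := by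
  have hcont : ∀ M, Continuous fun β => cesaroAvg (fun k => 𝐞 (θ k + ψ k * β)) M := by
    intro M; unfold cesaroAvg; fun_prop
  suffices ∀ n : ℤ, ∀ᵐ β ∂volume.restrict (Set.Ioc (n : ℝ) (n + 1)),
      Tendsto (cesaroAvg fun k => 𝐞 (θ k + ψ k * β)) atTop (𝓝 0) by
    rwa [← Measure.restrict_univ (μ := volume), ← iUnion_Ioc_intCast, ae_restrict_iUnion_iff]
  intro n
  have hsq : ∀ᵐ β ∂volume.restrict (Set.Ioc (n : ℝ) (n + 1)), Tendsto
      (fun m : ℕ => ‖cesaroAvg (fun k => 𝐞 (θ k + ψ k * β)) (m ^ 2)‖ ^ 2) atTop (𝓝 0) := by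
    refine ae_tendsto_zero_of_summable_integral (fun m β => sq_nonneg _)
      (fun m => ((hcont _).norm.pow 2).integrableOn_Ioc) ?_
    refine Summable.of_nonneg_of_le (fun m => integral_nonneg fun β => sq_nonneg _) (fun m => ?_)
      ((Real.summable_one_div_nat_pow.2 one_lt_two).mul_left ((K : ℝ) + 1))
    -- includes `m = 0`, where both sides vanish since `x / 0 = 0`
    rw [← intervalIntegral.integral_of_le (by linarith)]
    have := integral_norm_sq_cesaroAvg_fourierChar_le hψ θ n (m ^ 2)
    rwa [Nat.cast_pow, div_eq_mul_one_div] at this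
  filter_upwards [hsq] with β hβ
  refine tendsto_cesaroAvg_of_tendsto_sq (fun k => (Circle.norm_coe _).le) ?_
  rw [tendsto_zero_iff_norm_tendsto_zero]
  simpa using hβ.sqrt

theorem udMod1_iff {ι : Type*} [Fintype ι] (x : ℕ → ι → ℝ) :
    UDMod1 x ↔ ∀ a : ι → ℤ, a ≠ 0 →
      Tendsto (cesaroAvg fun k => 𝐞 (∑ i, a i * x k i)) atTop (𝓝 0) := by
  have hexp : ∀ (a : ι → ℤ) (k : ℕ), Complex.exp (2 * π * Complex.I * ∑ i, (a i : ℂ) * (x k i : ℂ))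
      = 𝐞 (∑ i, a i * x k i) := by
    intro a k; rw [fourierChar_apply]; push_cast; ring_nf
  simp only [UDMod1, hexp]
  rfl

theorem sum_mul_snoc {t N : ℕ} (a : Fin (t + 1) × Fin N → ℤ) (φ : Fin N → ℕ → ℤ) (k : ℕ)
    (α : Fin t → ℝ) (β : ℝ) :
    ∑ p : Fin (t + 1) × Fin N, (a p : ℝ) * (φ p.2 k * (Fin.snoc α β : Fin (t + 1) → ℝ) p.1) =
      ∑ p : Fin t × Fin N, (a (p.1.castSucc, p.2) : ℝ) * (φ p.2 k * α p.1) +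
        ((∑ j, a (Fin.last t, j) * φ j k : ℤ) : ℝ) * β := by
  rw [Fintype.sum_prod_type, Fin.sum_univ_castSucc, Fintype.sum_prod_type]
  simp only [Fin.snoc_castSucc, Fin.snoc_last]
  push_cast
  rw [Finset.sum_mul]
  congr 1
  exact Finset.sum_congr rfl fun j _ => by ring

/-- For strongly asymptotically independent `φ_1,…,φ_N`, `t ∈ ℕ`, and
`(α_1,…,α_t) ∈ 𝔐_t(φ_1,…,φ_N)`, the set of `α ∈ ℝ` with
`(α_1,…,α_t,α) ∈ 𝔐_{t+1}(φ_1,…,φ_N)` has full Lebesgue measure in `ℝ`. -/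
theorem stmt_8 (N : ℕ) (φ : Fin N → ℕ → ℤ) (hφ : StronglyAsympIndep N φ) (t : ℕ)
    (α : Fin t → ℝ)
    (hα : UDMod1 (fun k (p : Fin t × Fin N) => (φ p.2 k : ℝ) * α p.1)) :
    volume {β : ℝ |
      ¬ UDMod1 (fun k (p : Fin (t + 1) × Fin N) =>
        (φ p.2 k : ℝ) * (Fin.snoc α β : Fin (t + 1) → ℝ) p.1)} = 0 := by
  rw [← ae_iff]
  simp only [udMod1_iff] at hα ⊢
  simp only [sum_mul_snoc]
  rw [ae_all_iff]
  intro a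
  by_cases hc : ∀ j, a (Fin.last t, j) = 0
  · refine .of_forall fun β ha => ?_
    have hb : (fun p : Fin t × Fin N => a (p.1.castSucc, p.2)) ≠ 0 := fun hb =>
      ha <| funext fun ⟨i, j⟩ => i.lastCases (hc j) fun i => congrFun hb (i, j)
    simpa [hc] using hα _ hb
  · obtain ⟨K, hK⟩ := hφ _ fun h => hc (congrFun h)
    filter_upwards [ae_tendsto_cesaroAvg_fourierChar (hK.elim (·.injOn) (·.injOn)) _]
      with β hβ _ using hβ
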